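/- Let V be an n-dimensional real vector space equipped with a nondegenerate symmetric bilinear form (·,·) of signature (n−2,2), and let C₁, C₂, C₁′, C₂′ ∈ V. Assume that for every (s,t) ∈ [0,1]², the bilinear form (·,·) is negative definite on the 2-dimensional subspace z(s,t) := span{B₁(s), B₂(t)}. Let Q_S be any positive definite quadratic form on V satisfying (x,x) + 2·R(x, z(s,t)) ≥ Q_S(x) for all x ∈ V and all (s,t) ∈ [0,1]². Then every x ∈ V with Φ₂(x) ≠ 0 satisfies (x,x) ≥ Q_S(x). -/

import Mathlib

/-!
If `Φ₂(x) ≠ 0`, then `(x, C₁)` and `(x, C₁')` have different signs, so the linear function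
`s ↦ (x, B₁(s))` vanishes at some `s ∈ [0,1]`; likewise `(x, B₂(t)) = 0` for some `t ∈ [0,1]`.
Then `x ⊥ z(s,t)`, so `pr_{z(s,t)} x = 0`, `R(x, z(s,t)) = 0`, and the hypothesis on `Q_S`
at `(s,t)` reads `(x,x) ≥ Q_S(x)`.
-/

open Real Set

lemma zero_mem_uIcc_of_sign_ne {u v : ℝ} (h : Real.sign u ≠ Real.sign v) :
    (0 : ℝ) ∈ uIcc u v := by
  rw [mem_uIcc]
  by_contra! hout
  have hu0 : u ≠ 0 := by rintro rfl; linarith [hout.2 (hout.1 le_rfl).le]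
  have hv0 : v ≠ 0 := by rintro rfl; linarith [hout.1 (hout.2 le_rfl).le]
  rcases lt_or_gt_of_ne hu0 with hu | hu <;> rcases lt_or_gt_of_ne hv0 with hv | hv
  · exact h (by rw [Real.sign_of_neg hu, Real.sign_of_neg hv])
  · linarith [hout.1 hu.le]
  · linarith [hout.2 hv.le]
  · exact h (by rw [Real.sign_of_pos hu, Real.sign_of_pos hv])

lemma exists_mem_Icc_apply_segment_eq_zero {V : Type*} [AddCommGroup V] [Module ℝ V]
    (f : V →ₗ[ℝ] ℝ) {a b : V} (h : Real.sign (f a) ≠ Real.sign (f b)) :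
    ∃ s ∈ Icc (0 : ℝ) 1, f ((1 - s) • a + s • b) = 0 := by
  have h0 := zero_mem_uIcc_of_sign_ne h
  rw [← segment_eq_uIcc, segment_eq_image] at h0
  obtain ⟨s, hs, hs0⟩ := h0
  exact ⟨s, hs, by simpa using hs0⟩

/-- `R(x, z(s,t)) = -B w w`, where the projection `w = pr_{z(s,t)} x` is encoded by
`w ∈ z(s,t)` and `x - w ⊥ z(s,t)`. -/
theorem inner_self_ge_of_phi_ne_zero
    {V : Type*} [AddCommGroup V] [Module ℝ V]
    (B : LinearMap.BilinForm ℝ V)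
    (C₁ C₂ C₁' C₂' : V)
    (Q : QuadraticForm ℝ V)
    (hQ : ∀ x : V, ∀ s ∈ Icc (0:ℝ) 1, ∀ t ∈ Icc (0:ℝ) 1,
        ∀ w ∈ Submodule.span ℝ {(1 - s) • C₁ + s • C₁', (1 - t) • C₂ + t • C₂'},
          (∀ u ∈ Submodule.span ℝ {(1 - s) • C₁ + s • C₁', (1 - t) • C₂ + t • C₂'},
            B (x - w) u = 0) →
          B x x - 2 * B w w ≥ Q x)
    (x : V)
    (hΦ : (1/4 : ℝ) * (Real.sign (B x C₁) - Real.sign (B x C₁')) *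
        (Real.sign (B x C₂) - Real.sign (B x C₂')) ≠ 0) :
    B x x ≥ Q x := by
  obtain ⟨h₁, h₂⟩ := mul_ne_zero_iff.1 hΦ
  replace h₁ := right_ne_zero_of_mul h₁
  obtain ⟨s, hs, hx₁⟩ := exists_mem_Icc_apply_segment_eq_zero (B x) (sub_ne_zero.1 h₁)
  obtain ⟨t, ht, hx₂⟩ := exists_mem_Icc_apply_segment_eq_zero (B x) (sub_ne_zero.1 h₂)
  have hx_orth : Submodule.span ℝ {(1 - s) • C₁ + s • C₁', (1 - t) • C₂ + t • C₂'} ≤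
      LinearMap.ker (B x) :=
    Submodule.span_le.2 (insert_subset_iff.2 ⟨hx₁, singleton_subset_iff.2 hx₂⟩)
  simpa using hQ x s hs t ht 0 (Submodule.zero_mem _) fun u hu => by
    simpa using hx_orth hu
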